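/- Let F be a graph, let 2 ≤ p < r, set t = (r−2)|E(F)| + |V(F)|, and let G be an n-vertex r-graph. Define G_r = G and, for p ≤ i < r, G_i = Δ*(t)G_{i+1}. Then the number of hyperedges H of G for which there exist some q with p ≤ q < r and some q-element subset of H that is not a hyperedge of G_q is at most C·n^{r−1}, where C depends only on r and t. -/

import Mathlib

open Finset
open scoped Classical

/-- An `r`-uniform hypergraph on vertex type `V`: a finite set of `r`-element
vertex subsets, the hyperedges. -/
structure HyperGraph (V : Type*) (r : ℕ) where
  edges : Finset (Finset V)
  uniform : ∀ e ∈ edges, e.card = r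

namespace HyperGraph

variable {V α : Type*}

/-- A witness that the `r`-graph `G` contains a copy of the `r`-uniform expansion
`F^{(r)+}` of the graph `F`, with core embedding `φ` and, for each edge of `F`, a set
of `r - 2` expansion vertices given by `S`.  The expansion vertices avoid the core and
are pairwise disjoint over distinct edges. -/
def IsExpansionWitness [DecidableEq V] {r : ℕ} (G : HyperGraph V r) (F : SimpleGraph α)
    (φ : α ↪ V) (S : Sym2 α → Finset V) : Prop :=
  (∀ a b, F.Adj a b → (S s(a, b)).card = r - 2) ∧
  (∀ a b, F.Adj a b → ∀ x ∈ S s(a, b), x ∉ Set.range φ) ∧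
  (∀ e ∈ F.edgeSet, ∀ e' ∈ F.edgeSet, e ≠ e' → Disjoint (S e) (S e')) ∧
  (∀ a b, F.Adj a b → insert (φ a) (insert (φ b) (S s(a, b))) ∈ G.edges)

/-- The `r`-graph `G` contains a copy of the expansion `F^{(r)+}` (i.e. a subhypergraph
isomorphic to it). -/
def ContainsExpansion [DecidableEq V] {r : ℕ} (G : HyperGraph V r) (F : SimpleGraph α) : Prop :=
  ∃ φ S, G.IsExpansionWitness F φ S

end HyperGraph

/-- `ex_r(n, F^{(r)+})`: the maximum number of hyperedges in an `n`-vertex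
`F^{(r)+}`-free `r`-graph. -/
noncomputable def exExpansion (r n : ℕ) {α : Type*} (F : SimpleGraph α) : ℕ :=
  sSup {m | ∃ G : HyperGraph (Fin n) r, ¬ G.ContainsExpansion F ∧ G.edges.card = m}

/-- `F` is contained in `G` as a (not necessarily induced) subgraph. -/
def GraphContains {α β : Type*} (F : SimpleGraph α) (G : SimpleGraph β) : Prop :=
  ∃ f : α ↪ β, ∀ a b, F.Adj a b → G.Adj (f a) (f b)

/-- The number of copies of `K_r` (i.e. `r`-cliques) in the graph `G`. -/
noncomputable def cliqueCount {V : Type*} [Fintype V] (G : SimpleGraph V) (r : ℕ) : ℕ :=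
  Nat.card {s : Finset V // G.IsNClique r s}

/-- The generalized Turán number `ex(n, K_r, F)`: the maximum number of `r`-cliques
in an `n`-vertex `F`-free graph. -/
noncomputable def exClique (n r : ℕ) {α : Type*} (F : SimpleGraph α) : ℕ :=
  sSup {m | ∃ G : SimpleGraph (Fin n), ¬ GraphContains F G ∧ cliqueCount G r = m}

/-- The number of copies of the complete `p`-uniform hypergraph `K_r^p` in a `p`-graph `G`:
the number of `r`-element vertex sets all of whose `p`-subsets are hyperedges. -/
noncomputable def hyperCliqueCount {V : Type*} [Fintype V] {p : ℕ} (G : HyperGraph V p)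
    (r : ℕ) : ℕ :=
  Nat.card {R : Finset V // R.card = r ∧ ∀ e ⊆ R, e.card = p → e ∈ G.edges}

/-- `ex_p(n, K_r^p, F^{(p)+})`: the maximum number of copies of `K_r^p` in an `n`-vertex
`F^{(p)+}`-free `p`-graph. -/
noncomputable def exHyperClique (p r n : ℕ) {α : Type*} (F : SimpleGraph α) : ℕ :=
  sSup {m | ∃ G : HyperGraph (Fin n) p, ¬ G.ContainsExpansion F ∧ hyperCliqueCount G r = m}

/-- `G` contains (a subgraph isomorphic to) a member of the decomposition family `D(F)`:
a bipartite graph obtained from a proper `(k+1)`-coloring of `F` by deleting `k - 1`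
color classes. -/
def ContainsDecompMember {α β : Type*} (F : SimpleGraph α) (k : ℕ) (G : SimpleGraph β) : Prop :=
  ∃ c : α → Fin (k + 1), (∀ a b, F.Adj a b → c a ≠ c b) ∧
    ∃ i j : Fin (k + 1), i ≠ j ∧ GraphContains (F.induce {a | c a = i ∨ c a = j}) G

/-- `biex(n, F)`: the maximum number of edges of an `n`-vertex graph containing no member
of the decomposition family `D(F)` (for a graph `F` of chromatic number `k+1`). -/
noncomputable def biex (n : ℕ) {α : Type*} (F : SimpleGraph α) (k : ℕ) : ℕ :=
  sSup {m | ∃ G : SimpleGraph (Fin n), ¬ ContainsDecompMember F k G ∧ Nat.card G.edgeSet = m}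

/-- `t_r(n,k)`: the number of hyperedges of the complete balanced `k`-partite `r`-graph
`T_r(n,k)` (realized on `Fin n` with the balanced partition `v ↦ v % k`). -/
noncomputable def turanHyperCount (r n k : ℕ) : ℕ :=
  Nat.card {e : Finset (Fin n) // e.card = r ∧
    Set.InjOn (fun v : Fin n => v.val % k) ↑e}

/-- `|E(T_r(n,k,i))|`: the number of hyperedges of the `r`-graph obtained from `T_r(n-i,k)`
by adding `i` new vertices (here the vertices with value `< i`) and all `r`-sets containing
at least one of them. -/
noncomputable def turanPlusCount (r n k i : ℕ) : ℕ :=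
  Nat.card {e : Finset (Fin n) // e.card = r ∧
    ((∃ v ∈ e, v.val < i) ∨ Set.InjOn (fun v : Fin n => (v.val - i) % k) ↑e)}

/-- `G` has a color-critical edge: an edge whose deletion decreases the chromatic number. -/
def HasColorCriticalEdge {β : Type*} (G : SimpleGraph β) : Prop :=
  ∃ a b, G.Adj a b ∧ (G.deleteEdges {s(a, b)}).chromaticNumber < G.chromaticNumber

/-- `B_{k+1,1}`: two copies of `K_{k+1}` sharing exactly one vertex (the vertex `k`). -/
def bowtie (k : ℕ) : SimpleGraph (Fin (2 * k + 1)) :=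
  SimpleGraph.fromRel (fun a b => (a.val ≤ k ∧ b.val ≤ k) ∨ (k ≤ a.val ∧ k ≤ b.val))

/-- The `r`-graph `H'(m)` on `n` vertices: a complete `k`-partite `r`-graph with one part
`V_1` of size `m` (the vertices with value `< m`) and `k-1` balanced parts on the remaining
vertices, together with all `r`-sets containing both `u` (the vertex `0`) and `v` (the
vertex `1`), and all `r`-sets containing `u` and `r-1` vertices outside `V_1`. -/
noncomputable def HprimeGraph (r n k m : ℕ) : HyperGraph (Fin n) r :=
  ⟨Finset.univ.filter (fun e : Finset (Fin n) => e.card = r ∧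
      (Set.InjOn (fun v : Fin n => if v.val < m then 0 else (v.val - m) % (k - 1) + 1) ↑e
        ∨ ((∃ a ∈ e, a.val = 0) ∧ (∃ b ∈ e, b.val = 1))
        ∨ ((∃ a ∈ e, a.val = 0) ∧ ∀ w ∈ e, w.val ≠ 0 → m ≤ w.val))),
    fun e he => ((Finset.mem_filter.mp he).2).1⟩

/-- `Δ*(t)G`: the `(r-1)`-graph of `t`-heavy `(r-1)`-sets, i.e. the `(r-1)`-element
vertex sets contained in at least `t` hyperedges of `G`. -/
noncomputable def shadowOp {V : Type*} [Fintype V] [DecidableEq V] {r : ℕ} (t : ℕ)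
    (G : HyperGraph V r) : HyperGraph V (r - 1) :=
  ⟨Finset.univ.filter (fun A : Finset V =>
      A.card = r - 1 ∧ t ≤ (G.edges.filter (fun e => A ⊆ e)).card),
    fun A hA => ((Finset.mem_filter.mp hA).2).1⟩

/-- Iterated shadow operator: `iterShadow t G j = (Δ*(t))^j G`, a `(r-j)`-graph. -/
noncomputable def iterShadow {V : Type*} [Fintype V] [DecidableEq V] (t : ℕ) {r : ℕ}
    (G : HyperGraph V r) : (j : ℕ) → HyperGraph V (r - j)
  | 0 => G
  | j + 1 => shadowOp t (iterShadow t G j)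

/-- A vertex set `A` is `t`-fat with respect to `G`: there are at least `t` hyperedges
of `G` whose pairwise intersections all equal `A`. -/
def TFat {V : Type*} [DecidableEq V] {r : ℕ} (t : ℕ) (G : HyperGraph V r)
    (A : Finset V) : Prop :=
  ∃ E : Finset (Finset V), E ⊆ G.edges ∧ t ≤ E.card ∧
    ∀ e ∈ E, ∀ e' ∈ E, e ≠ e' → e ∩ e' = A

/-- The graph `G(𝒢)` of `t`-fat pairs of the `r`-graph `G`. -/
def fatGraph {V : Type*} [DecidableEq V] {r : ℕ} (t : ℕ) (G : HyperGraph V r) :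
    SimpleGraph V :=
  SimpleGraph.fromRel (fun x y => TFat t G {x, y})

/-- The `i`-graph whose hyperedges are the `t`-fat `i`-element vertex sets of `G`. -/
noncomputable def fatHyper {V : Type*} [Fintype V] [DecidableEq V] {r : ℕ} (t i : ℕ)
    (G : HyperGraph V r) : HyperGraph V i :=
  ⟨Finset.univ.filter (fun A : Finset V => A.card = i ∧ TFat t G A),
    fun A hA => ((Finset.mem_filter.mp hA).2).1⟩

/-- The `r`-graph whose hyperedges are the vertex sets of the `r`-cliques of `G`. -/
noncomputable def cliqueHyper {V : Type*} [Fintype V] (G : SimpleGraph V) (r : ℕ) :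
    HyperGraph V r :=
  ⟨Finset.univ.filter (fun e : Finset V => G.IsNClique r e),
    fun e he => ((Finset.mem_filter.mp he).2).card_eq⟩

/-- The `r`-graph on `n` vertices whose hyperedges are all `r`-sets containing the
fixed vertex `0`. -/
noncomputable def starHyper (n r : ℕ) : HyperGraph (Fin n) r :=
  ⟨Finset.univ.filter (fun e : Finset (Fin n) => e.card = r ∧ ∃ a ∈ e, a.val = 0),
    fun e he => ((Finset.mem_filter.mp he).2).1⟩

/-- `σ(F)`: the minimum size of a color class over all proper `(k+1)`-colorings of `F`. -/
noncomputable def sigmaF {α : Type*} (F : SimpleGraph α) (k : ℕ) : ℕ :=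
  sInf {m | ∃ c : α → Fin (k + 1), (∀ a b, F.Adj a b → c a ≠ c b) ∧
    ∃ i, m = Nat.card {a // c a = i}}

/-- The number of neighbors of `v` (in the graph `G`) lying in the part `i` of the
partition `P`. -/
noncomputable def nbrCount {n k : ℕ} (G : SimpleGraph (Fin n)) (P : Fin n → Fin k)
    (v : Fin n) (i : Fin k) : ℕ :=
  (Finset.univ.filter (fun w => G.Adj v w ∧ P w = i)).card

/-- The size of the part `i` of the partition `P`. -/
noncomputable def partSize {n k : ℕ} (P : Fin n → Fin k) (i : Fin k) : ℕ :=
  (Finset.univ.filter (fun v => P v = i)).card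

/-- Every copy (in the graph `G`) of a member of the decomposition family `D(F)` that lies
inside a single part of the partition `P` has at least two vertices in `B`. -/
def DecompInB {α : Type*} {n k : ℕ} (F : SimpleGraph α) (G : SimpleGraph (Fin n))
    (P : Fin n → Fin k) (B : Finset (Fin n)) : Prop :=
  ∀ c : α → Fin (k + 1), (∀ a b, F.Adj a b → c a ≠ c b) →
    ∀ i j : Fin (k + 1), i ≠ j →
      ∀ ψ : {a : α // c a = i ∨ c a = j} ↪ Fin n,
        (∀ a b : {a : α // c a = i ∨ c a = j}, F.Adj a.1 b.1 → G.Adj (ψ a) (ψ b)) →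
        (∀ a b : {a : α // c a = i ∨ c a = j}, P (ψ a) = P (ψ b)) →
        ∃ a b : {a : α // c a = i ∨ c a = j}, a ≠ b ∧ ψ a ∈ B ∧ ψ b ∈ B

/-! A bad hyperedge `H` has, along a chain `A = A_q ⊂ A_{q+1} ⊂ ⋯ ⊂ A_r = H`, a first
step where `A_{j+1} ∈ G_{j+1}` but `A_j ∉ G_j = Δ*(t)G_{j+1}`, i.e. `A_j` lies in fewer than
`t` hyperedges of `G_{j+1}`. Hence `H` contains a hyperedge `B = A_{j+1}` of `G_{j+1}` with a
light `j`-subset. There are at most `t·n^j` such `B` (each is found from one of the at most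
`n^j` light sets), and each lies in at most `n^{r-j-1}` hyperedges of `G`. -/

namespace HyperGraph

variable {V : Type*} [Fintype V] [DecidableEq V]

theorem card_filter_superset_le {r : ℕ} (G : HyperGraph V r) (B : Finset V) :
    (G.edges.filter (B ⊆ ·)).card ≤ Fintype.card V ^ (r - B.card) := by
  calc (G.edges.filter (B ⊆ ·)).card
      ≤ (powersetCard (r - B.card) (univ : Finset V)).card := by
        refine card_le_card_of_injOn (· \ B) (fun H hH => ?_) (fun H hH H' hH' hHH' => ?_)
        · rw [mem_coe, mem_filter] at hH
          rw [mem_coe, mem_powersetCard, card_sdiff_of_subset hH.2, G.uniform H hH.1]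
          exact ⟨subset_univ _, rfl⟩
        · rw [mem_coe, mem_filter] at hH hH'
          rw [← sdiff_union_of_subset hH.2, ← sdiff_union_of_subset hH'.2]
          exact congrArg (· ∪ B) hHH'
    _ = (Fintype.card V).choose (r - B.card) := by rw [card_powersetCard, card_univ]
    _ ≤ Fintype.card V ^ (r - B.card) := Nat.choose_le_pow _ _

theorem card_filter_exists_subset_le {r k : ℕ} (G : HyperGraph V r) (W : Finset (Finset V))
    (hW : ∀ B ∈ W, B.card = k) :
    (G.edges.filter (fun H => ∃ B ∈ W, B ⊆ H)).card ≤ W.card * Fintype.card V ^ (r - k) := by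
  calc (G.edges.filter (fun H => ∃ B ∈ W, B ⊆ H)).card
      ≤ (W.biUnion (fun B => G.edges.filter (B ⊆ ·))).card := by
        refine card_le_card fun H hH => ?_
        obtain ⟨hHG, B, hBW, hBH⟩ := mem_filter.mp hH
        exact mem_biUnion.mpr ⟨B, hBW, mem_filter.mpr ⟨hHG, hBH⟩⟩
    _ ≤ W.card * Fintype.card V ^ (r - k) :=
        card_biUnion_le_card_mul _ _ _ fun B hB => hW B hB ▸ G.card_filter_superset_le B

theorem card_filter_superset_lt_of_notMem_shadowOp {r t : ℕ} (G : HyperGraph V r)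
    {A : Finset V} (hA : A.card = r - 1) (hAG : A ∉ (shadowOp t G).edges) :
    (G.edges.filter (A ⊆ ·)).card < t := by
  by_contra! h
  exact hAG (mem_filter.mpr ⟨mem_univ _, hA, h⟩)

theorem card_filter_exists_light_subset_le {r : ℕ} (t : ℕ) (G : HyperGraph V r) :
    (G.edges.filter (fun B => ∃ A ⊆ B, A.card = r - 1 ∧ A ∉ (shadowOp t G).edges)).card
      ≤ t * Fintype.card V ^ (r - 1) := by
  set L := (powersetCard (r - 1) (univ : Finset V)).filter (· ∉ (shadowOp t G).edges)
  calc _ ≤ (L.biUnion (fun A => G.edges.filter (A ⊆ ·))).card := by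
        refine card_le_card fun B hB => ?_
        obtain ⟨hBG, A, hAB, hA, hAG⟩ := mem_filter.mp hB
        exact mem_biUnion.mpr ⟨A, mem_filter.mpr ⟨mem_powersetCard.mpr ⟨subset_univ _, hA⟩, hAG⟩,
          mem_filter.mpr ⟨hBG, hAB⟩⟩
    _ ≤ L.card * t := card_biUnion_le_card_mul _ _ _ fun A hA => by
        obtain ⟨hA, hAG⟩ := mem_filter.mp hA
        exact (G.card_filter_superset_lt_of_notMem_shadowOp (mem_powersetCard.mp hA).2 hAG).le
    _ ≤ (powersetCard (r - 1) (univ : Finset V)).card * t := by gcongr; exact filter_subset _ _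
    _ ≤ t * Fintype.card V ^ (r - 1) := by
        rw [card_powersetCard, card_univ, mul_comm]
        exact Nat.mul_le_mul_left _ (Nat.choose_le_pow _ _)

theorem iterShadow_edges_of_lt {r t q : ℕ} (G : HyperGraph V r) (hq : q < r) :
    (iterShadow t G (r - q)).edges = (shadowOp t (iterShadow t G (r - (q + 1)))).edges := by
  rw [show r - q = r - (q + 1) + 1 by omega]
  rfl

theorem exists_light_step {r t : ℕ} {G : HyperGraph V r} {H : Finset V} (hH : H ∈ G.edges) :
    ∀ {q : ℕ} {A : Finset V}, q < r → A ⊆ H → A.card = q →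
      A ∉ (iterShadow t G (r - q)).edges →
      ∃ j, q ≤ j ∧ j < r ∧ ∃ B ⊆ H, B ∈ (iterShadow t G (r - (j + 1))).edges ∧
        ∃ A' ⊆ B, A'.card = j ∧ A' ∉ (shadowOp t (iterShadow t G (r - (j + 1)))).edges := by
  intro q A hq hAH hA hAG
  induction h : r - q generalizing q A with
  | zero => omega
  | succ d ih =>
    have hHr := G.uniform H hH
    obtain ⟨B, hAB, hBH, hB⟩ := exists_subsuperset_card_eq hAH (n := q + 1) (by omega) (by omega)
    by_cases hBG : B ∈ (iterShadow t G (r - (q + 1))).edges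
    · exact ⟨q, le_rfl, hq, B, hBH, hBG, A, hAB, hA, iterShadow_edges_of_lt G hq ▸ hAG⟩
    · have hqr : q + 1 < r := by
        by_contra! hqr
        obtain rfl : B = H := eq_of_subset_of_card_le hBH (by omega)
        exact hBG (by rw [show r - (q + 1) = 0 by omega]; exact hH)
      obtain ⟨j, hj, hjr, rest⟩ := ih hqr hBH hB hBG (by omega)
      exact ⟨j, by omega, hjr, rest⟩

end HyperGraph

theorem statement_16_general (r p t : ℕ) :
    ∃ C : ℕ, ∀ n : ℕ, ∀ G : HyperGraph (Fin n) r,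
      (G.edges.filter (fun H => ∃ q, p ≤ q ∧ q < r ∧
        ∃ A ⊆ H, A.card = q ∧ A ∉ (iterShadow t G (r - q)).edges)).card
        ≤ C * n ^ (r - 1) := by
  refine ⟨r * t, fun n G => ?_⟩
  set W : ℕ → Finset (Finset (Fin n)) := fun j => (iterShadow t G (r - (j + 1))).edges.filter
    fun B => ∃ A ⊆ B, A.card = j ∧ A ∉ (shadowOp t (iterShadow t G (r - (j + 1)))).edges
  have hbad : G.edges.filter (fun H => ∃ q, p ≤ q ∧ q < r ∧
      ∃ A ⊆ H, A.card = q ∧ A ∉ (iterShadow t G (r - q)).edges) ⊆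
      (Ico p r).biUnion fun j => G.edges.filter fun H => ∃ B ∈ W j, B ⊆ H := by
    intro H hH
    obtain ⟨hHG, q, hpq, hqr, A, hAH, hA, hAG⟩ := mem_filter.mp hH
    obtain ⟨j, hqj, hjr, B, hBH, hBG, hlight⟩ := HyperGraph.exists_light_step hHG hqr hAH hA hAG
    exact mem_biUnion.mpr ⟨j, mem_Ico.mpr ⟨by omega, hjr⟩,
      mem_filter.mpr ⟨hHG, B, mem_filter.mpr ⟨hBG, hlight⟩, hBH⟩⟩
  have hstep : ∀ j ∈ Ico p r,
      (G.edges.filter fun H => ∃ B ∈ W j, B ⊆ H).card ≤ t * n ^ (r - 1) := by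
    intro j hj
    have hjr : j < r := (mem_Ico.mp hj).2
    have hcard : r - (r - (j + 1)) = j + 1 := by omega
    have hW : (W j).card ≤ t * n ^ j := by
      simpa [hcard] using
        HyperGraph.card_filter_exists_light_subset_le t (iterShadow t G (r - (j + 1)))
    calc _ ≤ (W j).card * n ^ (r - (j + 1)) := by
          simpa using G.card_filter_exists_subset_le (W j) (k := j + 1) fun B hB =>
            hcard ▸ (iterShadow t G (r - (j + 1))).uniform B (mem_filter.mp hB).1
      _ ≤ t * n ^ j * n ^ (r - (j + 1)) := Nat.mul_le_mul_right _ hW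
      _ = t * n ^ (r - 1) := by rw [mul_assoc, ← pow_add, show j + (r - (j + 1)) = r - 1 by omega]
  calc _ ≤ _ := card_le_card hbad
    _ ≤ (Ico p r).card * (t * n ^ (r - 1)) := card_biUnion_le_card_mul _ _ _ hstep
    _ ≤ r * t * n ^ (r - 1) := by
        rw [Nat.card_Ico, mul_assoc]
        exact Nat.mul_le_mul_right _ (Nat.sub_le r p)

/-- With `t = (r−2)|E(F)| + |V(F)|`, `2 ≤ p < r`, `G_r = G` and
`G_i = Δ*(t)G_{i+1}`: the number of hyperedges `H` of an `n`-vertex `r`-graph `G` having,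
for some `p ≤ q < r`, a `q`-subset that is not a hyperedge of `G_q`, is at most
`C·n^{r−1}` for a constant `C` depending only on `r` and `t`. -/
theorem statement_16 {α : Type*} [Fintype α] (F : SimpleGraph α) (r p t : ℕ)
    (hp : 2 ≤ p) (hpr : p < r)
    (ht : t = (r - 2) * Nat.card F.edgeSet + Fintype.card α) :
    ∃ C : ℕ, ∀ n : ℕ, ∀ G : HyperGraph (Fin n) r,
      (G.edges.filter (fun H => ∃ q, p ≤ q ∧ q < r ∧
        ∃ A ⊆ H, A.card = q ∧ A ∉ (iterShadow t G (r - q)).edges)).card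
        ≤ C * n ^ (r - 1) :=
  statement_16_general r p t
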